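/- arXiv:2401.13491 — 3 statements merged into one kernel-verified Lean document; each statement's English description precedes it below -/
import Mathlib

section
/- Given an internal tensor structure (⊗, m) on an S-fibered category H, the data assigning to (S;1) the category H(S), to (S;2) the category H(S) × H(S), with inverse images f^*, (f^*, f^*), and f^* ∘ (⊗) respectively, and with connection isomorphisms built from conn and m, defines an (S × I)-fibered category H^⊗ (i.e., the cocycle condition holds in all five cases of composable pairs). -/
open CategoryTheory Limits

universe v u w z

/-- An `S`-fibered category, presented as a (strictly unital) contravariant
pseudofunctor: a category `H S` for every object, an inverse image functor `f^*`
for every morphism (with `(𝟙 S)^* = 𝟭`), and connection isomorphisms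
`conn f g : (f ≫ g)^* ≅ g^* ⋙ f^*` satisfying the cocycle condition (S-fib-1). -/
structure SFib (S : Type z) [Category.{w} S] where
  H : S → Type u
  [cat : ∀ s, Category.{v} (H s)]
  pull : ∀ {t s : S}, (t ⟶ s) → H s ⥤ H t
  pull_id : ∀ s : S, pull (𝟙 s) = 𝟭 (H s)
  conn : ∀ {t s v : S} (f : t ⟶ s) (g : s ⟶ v), pull (f ≫ g) ≅ pull g ⋙ pull f
  cocycle :
    ∀ {t s v w : S} (f : t ⟶ s) (g : s ⟶ v) (h : v ⟶ w),
      (conn f (g ≫ h)).hom ≫ Functor.whiskerRight (conn g h).hom (pull f) =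
        eqToHom (show pull (f ≫ g ≫ h) = pull ((f ≫ g) ≫ h) by rw [Category.assoc]) ≫
          (conn (f ≫ g) h).hom ≫ Functor.whiskerLeft (pull h) (conn f g).hom

attribute [instance] SFib.cat

/-- An internal tensor structure on an `S`-fibered category: tensor product functors
`⊗_S : H(S) × H(S) ⥤ H(S)` together with internal monoidality isomorphisms
`m_f : f^*A ⊗ f^*B ≅ f^*(A ⊗ B)` satisfying the cocycle condition (mITS). -/
structure ITS {S : Type z} [Category.{w} S] (F : SFib.{v, u} S) where
  tensor : ∀ s : S, F.H s × F.H s ⥤ F.H s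
  m : ∀ {t s : S} (f : t ⟶ s),
      (F.pull f).prod (F.pull f) ⋙ tensor t ≅ tensor s ⋙ F.pull f
  mITS :
    ∀ {t s v : S} (f : t ⟶ s) (g : s ⟶ v),
      Functor.whiskerRight (NatTrans.prod (F.conn f g).hom (F.conn f g).hom) (tensor t) ≫
          Functor.whiskerLeft ((F.pull g).prod (F.pull g)) (m f).hom ≫
          Functor.whiskerRight (m g).hom (F.pull f) =
        (m (f ≫ g)).hom ≫ Functor.whiskerLeft (tensor v) (F.conn f g).hom

/-- The non-identity arrow of the interval category (modeled on `Fin 2`). -/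
def intArrow : (0 : Fin 2) ⟶ (1 : Fin 2) := homOfLE (by decide)

/-!
Over a composable triple in `S × I` the second coordinates are `0 ≤ 0 ≤ 0 ≤ 0`, `0 ≤ 0 ≤ 0 ≤ 1`,
`0 ≤ 0 ≤ 1 ≤ 1`, `0 ≤ 1 ≤ 1 ≤ 1` or `1 ≤ 1 ≤ 1 ≤ 1`. In four of these cases the cocycle
condition of `H^⊗` is that of `H`, possibly precomposed with `⊗` or taken componentwise; in the
case `0 ≤ 1 ≤ 1 ≤ 1`, where `m` enters on both sides, it follows from the cocycle condition of `H`
together with (mITS) solved for `m_{gf}⁻¹`.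
-/

theorem Fin.not_hom_one_zero (φ : (1 : Fin 2) ⟶ 0) : False :=
  absurd (leOfHom φ) (by decide)

namespace SFib

variable {S : Type z} [Category.{w} S] {t s v w : S}

theorem cocycle_prod (F F' : SFib.{v, u} S) (f : t ⟶ s) (g : s ⟶ v) (h : v ⟶ w) :
    (NatIso.prod (F.conn f (g ≫ h)) (F'.conn f (g ≫ h))).hom ≫
      Functor.whiskerRight (NatIso.prod (F.conn g h) (F'.conn g h)).hom
        ((F.pull f).prod (F'.pull f)) =
    eqToHom (show (F.pull (f ≫ g ≫ h)).prod (F'.pull (f ≫ g ≫ h)) =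
          (F.pull ((f ≫ g) ≫ h)).prod (F'.pull ((f ≫ g) ≫ h)) by rw [Category.assoc]) ≫
      (NatIso.prod (F.conn (f ≫ g) h) (F'.conn (f ≫ g) h)).hom ≫
      Functor.whiskerLeft ((F.pull h).prod (F'.pull h))
        (NatIso.prod (F.conn f g) (F'.conn f g)).hom := by
  ext X
  · simpa using congr_app (F.cocycle f g h) X.1
  · simpa using congr_app (F'.cocycle f g h) X.2

theorem cocycle_whiskerLeft (F : SFib.{v, u} S) {C : Type*} [Category C] (K : C ⥤ F.H w)
    (f : t ⟶ s) (g : s ⟶ v) (h : v ⟶ w) :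
    (Functor.isoWhiskerLeft K (F.conn f (g ≫ h))).hom ≫
      Functor.whiskerRight (Functor.isoWhiskerLeft K (F.conn g h)).hom (F.pull f) =
    eqToHom (show K ⋙ F.pull (f ≫ g ≫ h) = K ⋙ F.pull ((f ≫ g) ≫ h) by
        rw [Category.assoc]) ≫
      (Functor.isoWhiskerLeft K (F.conn (f ≫ g) h)).hom ≫
      Functor.whiskerLeft (K ⋙ F.pull h) (F.conn f g).hom := by
  ext X
  simpa using congr_app (F.cocycle f g h) (K.obj X)

end SFib

namespace ITS

variable {S : Type z} [Category.{w} S] {F : SFib.{v, u} S} (T : ITS F)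

section

variable {t s v w : S}

/-- The connection isomorphism of `H^⊗` for `(f, intArrow)` followed by `(g, 𝟙 1)`. -/
def connTensor (f : t ⟶ s) (g : s ⟶ v) :
    T.tensor v ⋙ F.pull (f ≫ g) ≅ (F.pull g).prod (F.pull g) ⋙ T.tensor s ⋙ F.pull f :=
  Functor.isoWhiskerLeft (T.tensor v) (F.conn f g) ≪≫
    Functor.isoWhiskerRight (T.m g).symm (F.pull f)

theorem m_inv_comp_map_conn (f : t ⟶ s) (g : s ⟶ v) (X : F.H v × F.H v) :
    (T.m (f ≫ g)).inv.app X ≫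
        (T.tensor t).map ((NatTrans.prod (F.conn f g).hom (F.conn f g).hom).app X) =
      (F.conn f g).hom.app ((T.tensor v).obj X) ≫ (F.pull f).map ((T.m g).inv.app X) ≫
        (T.m f).inv.app ((F.pull g).obj X.1, (F.pull g).obj X.2) := by
  rw [← cancel_mono ((T.m f).hom.app ((F.pull g).obj X.1, (F.pull g).obj X.2)),
    ← cancel_mono ((F.pull f).map ((T.m g).hom.app X))]
  have hmITS := congr_app (T.mITS f g) X
  simp only [Functor.comp_obj, Functor.prod_obj, NatTrans.comp_app, Functor.whiskerRight_app,
    Functor.whiskerLeft_app] at hmITS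
  simp [← Functor.map_comp, hmITS]

theorem cocycle_whiskerLeft_connTensor (f : t ⟶ s) (g : s ⟶ v) (h : v ⟶ w) :
    (Functor.isoWhiskerLeft (T.tensor w) (F.conn f (g ≫ h))).hom ≫
      Functor.whiskerRight (T.connTensor g h).hom (F.pull f) =
    eqToHom (show T.tensor w ⋙ F.pull (f ≫ g ≫ h) = T.tensor w ⋙ F.pull ((f ≫ g) ≫ h) by
        rw [Category.assoc]) ≫
      (T.connTensor (f ≫ g) h).hom ≫
      Functor.whiskerLeft ((F.pull h).prod (F.pull h))
        (Functor.isoWhiskerLeft (T.tensor v) (F.conn f g)).hom := by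
  ext X
  have hcocycle := congr_app (F.cocycle f g h) ((T.tensor w).obj X)
  simp only [NatTrans.comp_app, Functor.whiskerRight_app, Functor.whiskerLeft_app,
    eqToHom_app] at hcocycle
  simp [connTensor, reassoc_of% hcocycle]

theorem cocycle_connTensor_prod (f : t ⟶ s) (g : s ⟶ v) (h : v ⟶ w) :
    (T.connTensor f (g ≫ h)).hom ≫
      Functor.whiskerRight (NatIso.prod (F.conn g h) (F.conn g h)).hom (T.tensor s ⋙ F.pull f) =
    eqToHom (show T.tensor w ⋙ F.pull (f ≫ g ≫ h) = T.tensor w ⋙ F.pull ((f ≫ g) ≫ h) by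
        rw [Category.assoc]) ≫
      (T.connTensor (f ≫ g) h).hom ≫
      Functor.whiskerLeft ((F.pull h).prod (F.pull h)) (T.connTensor f g).hom := by
  ext X
  have hcocycle := congr_app (F.cocycle f g h) ((T.tensor w).obj X)
  simp only [NatTrans.comp_app, Functor.whiskerRight_app, Functor.whiskerLeft_app,
    eqToHom_app] at hcocycle
  simp [connTensor, ← reassoc_of% hcocycle, ← Functor.map_comp, T.m_inv_comp_map_conn]

end

/-- The fibers of `H^⊗`: `H(s)` over `(s;1)`, encoded as `(s, 0)`, and `H(s) × H(s)`
over `(s;2)`, encoded as `(s, 1)`. -/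
def Fiber (F : SFib.{v, u} S) : S × Fin 2 → Type u := fun p =>
  match p.2 with
  | 0 => F.H p.1
  | 1 => F.H p.1 × F.H p.1

instance (F : SFib.{v, u} S) : ∀ p : S × Fin 2, Category.{v} (Fiber F p)
  | (s, 0) => inferInstanceAs (Category (F.H s))
  | (s, 1) => inferInstanceAs (Category (F.H s × F.H s))

def fiberPull : ∀ {p q : S × Fin 2}, (p ⟶ q) → (Fiber F q ⥤ Fiber F p)
  | (_, 0), (_, 0), φ => F.pull φ.1
  | (_, 1), (_, 1), φ => (F.pull φ.1).prod (F.pull φ.1)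
  | (_, 0), (s, 1), φ => T.tensor s ⋙ F.pull φ.1
  | (_, 1), (_, 0), φ => (Fin.not_hom_one_zero φ.2).elim

def fiberConn : ∀ {p q r : S × Fin 2} (φ : p ⟶ q) (ψ : q ⟶ r),
    T.fiberPull (φ ≫ ψ) ≅ T.fiberPull ψ ⋙ T.fiberPull φ
  | (_, 0), (_, 0), (_, 0), φ, ψ => F.conn φ.1 ψ.1
  | (_, 1), (_, 1), (_, 1), φ, ψ => NatIso.prod (F.conn φ.1 ψ.1) (F.conn φ.1 ψ.1)
  | (_, 0), (_, 0), (v, 1), φ, ψ => Functor.isoWhiskerLeft (T.tensor v) (F.conn φ.1 ψ.1)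
  | (_, 0), (_, 1), (_, 1), φ, ψ => T.connTensor φ.1 ψ.1
  | (_, 1), (_, 0), _, φ, _ => (Fin.not_hom_one_zero φ.2).elim
  | (_, 1), (_, 1), (_, 0), _, ψ => (Fin.not_hom_one_zero ψ.2).elim
  | (_, 0), (_, 1), (_, 0), _, ψ => (Fin.not_hom_one_zero ψ.2).elim

theorem fiberPull_id (p : S × Fin 2) : T.fiberPull (𝟙 p) = 𝟭 (Fiber F p) := by
  obtain ⟨s, i⟩ := p
  fin_cases i
  · exact F.pull_id s
  · exact congrArg (fun P => P.prod P) (F.pull_id s)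

theorem fiberConn_cocycle {p q r o : S × Fin 2} (φ : p ⟶ q) (ψ : q ⟶ r) (χ : r ⟶ o) :
    (T.fiberConn φ (ψ ≫ χ)).hom ≫ Functor.whiskerRight (T.fiberConn ψ χ).hom (T.fiberPull φ) =
      eqToHom (by rw [Category.assoc]) ≫
        (T.fiberConn (φ ≫ ψ) χ).hom ≫ Functor.whiskerLeft (T.fiberPull χ) (T.fiberConn φ ψ).hom := by
  obtain ⟨t, i⟩ := p
  obtain ⟨s, j⟩ := q
  obtain ⟨v, k⟩ := r
  obtain ⟨w, l⟩ := o
  obtain ⟨f, hf⟩ := φ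
  obtain ⟨g, hg⟩ := ψ
  obtain ⟨h, hh⟩ := χ
  fin_cases i <;> fin_cases j <;> fin_cases k <;> fin_cases l <;>
    first
    | exact (Fin.not_hom_one_zero hf).elim
    | exact (Fin.not_hom_one_zero hg).elim
    | exact (Fin.not_hom_one_zero hh).elim
    | skip
  · exact F.cocycle f g h
  · exact F.cocycle_whiskerLeft (T.tensor w) f g h
  · exact T.cocycle_whiskerLeft_connTensor f g h
  · exact T.cocycle_connTensor_prod f g h
  · exact F.cocycle_prod F f g h

/-- The `(S × I)`-fibered category `H^⊗`. -/
def toSFib : SFib.{v, u} (S × Fin 2) where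
  H := Fiber F
  pull := T.fiberPull
  pull_id := T.fiberPull_id
  conn := T.fiberConn
  cocycle := T.fiberConn_cocycle

end ITS

/-- An internal tensor structure `(⊗, m)` on an `S`-fibered category
`H` determines an `(S × I)`-fibered category `H^⊗` (here `I` is the interval category,
modeled on `Fin 2` with its unique non-identity arrow `intArrow : 0 ⟶ 1`): its fiber
over `(s, 1)` is `H(s) × H(s)`, over `(s, 0)` it is `H(s)`, the inverse images are
`(f^*, f^*)`, `f^*` and `f^* ∘ (⊗)` respectively, and the connection isomorphisms,
built from `conn` and `m`, satisfy the cocycle condition (which is part of the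
structure `SFib (S × Fin 2)`, covering all five cases of composable pairs). -/
theorem stmt6 {S : Type z} [Category.{w} S] (F : SFib.{v, u} S) (T : ITS F) :
    ∃ G : SFib.{v, u} (S × Fin 2),
      (∀ s : S, G.H (s, 1) = (F.H s × F.H s)) ∧
      (∀ s : S, G.H (s, 0) = F.H s) ∧
      (∀ s : S, HEq (G.cat (s, 1)) (inferInstance : Category.{v} (F.H s × F.H s))) ∧
      (∀ s : S, HEq (G.cat (s, 0)) (F.cat s)) ∧
      (∀ {t s : S} (f : t ⟶ s),
        HEq (G.pull ((f, 𝟙 (1 : Fin 2)) : (t, (1 : Fin 2)) ⟶ (s, 1)))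
          ((F.pull f).prod (F.pull f))) ∧
      (∀ {t s : S} (f : t ⟶ s),
        HEq (G.pull ((f, 𝟙 (0 : Fin 2)) : (t, (0 : Fin 2)) ⟶ (s, 0))) (F.pull f)) ∧
      (∀ {t s : S} (f : t ⟶ s),
        HEq (G.pull ((f, intArrow) : (t, (0 : Fin 2)) ⟶ (s, 1)))
          (T.tensor s ⋙ F.pull f)) ∧
      (∀ {t s v : S} (f : t ⟶ s) (g : s ⟶ v),
        HEq (G.conn ((f, 𝟙 (1 : Fin 2)) : (t, (1 : Fin 2)) ⟶ (s, 1))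
              ((g, 𝟙 (1 : Fin 2)) : (s, (1 : Fin 2)) ⟶ (v, 1)))
          (NatIso.prod (F.conn f g) (F.conn f g))) ∧
      (∀ {t s v : S} (f : t ⟶ s) (g : s ⟶ v),
        HEq (G.conn ((f, 𝟙 (0 : Fin 2)) : (t, (0 : Fin 2)) ⟶ (s, 0))
              ((g, 𝟙 (0 : Fin 2)) : (s, (0 : Fin 2)) ⟶ (v, 0)))
          (F.conn f g)) ∧
      (∀ {t s v : S} (f : t ⟶ s) (g : s ⟶ v),
        HEq (G.conn ((f, 𝟙 (0 : Fin 2)) : (t, (0 : Fin 2)) ⟶ (s, 0))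
              ((g, intArrow) : (s, (0 : Fin 2)) ⟶ (v, 1)))
          (Functor.isoWhiskerLeft (T.tensor v) (F.conn f g))) ∧
      (∀ {t s v : S} (f : t ⟶ s) (g : s ⟶ v),
        HEq (G.conn ((f, intArrow) : (t, (0 : Fin 2)) ⟶ (s, 1))
              ((g, 𝟙 (1 : Fin 2)) : (s, (1 : Fin 2)) ⟶ (v, 1)))
          (Functor.isoWhiskerLeft (T.tensor v) (F.conn f g) ≪≫
            Functor.isoWhiskerRight (T.m g).symm (F.pull f))) := by
  exact ⟨T.toSFib, fun _ => rfl, fun _ => rfl, fun _ => HEq.rfl, fun _ => HEq.rfl,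
    fun _ => HEq.rfl, fun _ => HEq.rfl, fun _ => HEq.rfl,
    fun _ _ => HEq.rfl, fun _ _ => HEq.rfl, fun _ _ => HEq.rfl, fun _ _ => HEq.rfl⟩
end

section
/- In a triangulated category D with a bi-triangulated bifunctor ⊗ (with isomorphisms A[1] ⊗ B ≅ (A ⊗ B)[1] and A ⊗ B[1] ≅ (A ⊗ B)[1]) such that the square comparing A[1] ⊗ B[1] with (A ⊗ B)[2] via the two orders anti-commutes (axiom (triITS-1)), and with a triangulated symmetry c compatible with the first-variable shift (axiom (tricITS): c ∘ (shift iso) = (shift iso) ∘ c for A[1] ⊗ B → (B ⊗ A)[1]), the analogous compatibility of c with the second-variable shift, A ⊗ B[1] → (B ⊗ A)[1], holds up to the sign conventions forced by c ∘ c = id and (triITS-1). -/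
open CategoryTheory

/-- Let `D` be an additive category with shift (e.g. a triangulated
category) carrying a bifunctor `⊗` exact in each variable, with shift-compatibility
isomorphisms `s₁ : A⟦1⟧ ⊗ B ≅ (A ⊗ B)⟦1⟧` and `s₂ : A ⊗ B⟦1⟧ ≅ (A ⊗ B)⟦1⟧` whose
double-shift square anti-commutes (axiom (triITS-1)), and a symmetry `c` with
`c ∘ c = id` that is compatible with the shift in the first variable (axiom
(tricITS)).  Then the analogous compatibility of `c` with the shift in the second
variable, `A ⊗ B⟦1⟧ ⟶ (B ⊗ A)⟦1⟧`, holds (with the sign conventions forced by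
`c ∘ c = id` and (triITS-1)). -/
theorem stmt17 {D : Type*} [Category D] [Preadditive D] [HasShift D ℤ]
    (T : D × D ⥤ D)
    (s₁ : ∀ A B : D, T.obj (A⟦(1 : ℤ)⟧, B) ≅ (T.obj (A, B))⟦(1 : ℤ)⟧)
    (s₂ : ∀ A B : D, T.obj (A, B⟦(1 : ℤ)⟧) ≅ (T.obj (A, B))⟦(1 : ℤ)⟧)
    (hs₁ : ∀ {A A' B B' : D} (f : A ⟶ A') (g : B ⟶ B'),
      T.map (((shiftFunctor D (1 : ℤ)).map f, g) :
          (A⟦(1 : ℤ)⟧, B) ⟶ (A'⟦(1 : ℤ)⟧, B')) ≫ (s₁ A' B').hom =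
        (s₁ A B).hom ≫
          (shiftFunctor D (1 : ℤ)).map (T.map ((f, g) : (A, B) ⟶ (A', B'))))
    (hs₂ : ∀ {A A' B B' : D} (f : A ⟶ A') (g : B ⟶ B'),
      T.map ((f, (shiftFunctor D (1 : ℤ)).map g) :
          (A, B⟦(1 : ℤ)⟧) ⟶ (A', B'⟦(1 : ℤ)⟧)) ≫ (s₂ A' B').hom =
        (s₂ A B).hom ≫
          (shiftFunctor D (1 : ℤ)).map (T.map ((f, g) : (A, B) ⟶ (A', B'))))
    (anticomm : ∀ A B : D,
      (s₁ A (B⟦(1 : ℤ)⟧)).hom ≫ (shiftFunctor D (1 : ℤ)).map (s₂ A B).hom =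
        -((s₂ (A⟦(1 : ℤ)⟧) B).hom ≫ (shiftFunctor D (1 : ℤ)).map (s₁ A B).hom))
    (c : ∀ A B : D, T.obj (A, B) ⟶ T.obj (B, A))
    (hcnat : ∀ {A A' B B' : D} (f : A ⟶ A') (g : B ⟶ B'),
      T.map ((f, g) : (A, B) ⟶ (A', B')) ≫ c A' B' =
        c A B ≫ T.map ((g, f) : (B, A) ⟶ (B', A')))
    (hcinv : ∀ A B : D, c A B ≫ c B A = 𝟙 (T.obj (A, B)))
    (tricITS : ∀ A B : D,
      c (A⟦(1 : ℤ)⟧) B ≫ (s₂ B A).hom =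
        (s₁ A B).hom ≫ (shiftFunctor D (1 : ℤ)).map (c A B)) :
    ∀ A B : D,
      c A (B⟦(1 : ℤ)⟧) ≫ (s₁ B A).hom =
        (s₂ A B).hom ≫ (shiftFunctor D (1 : ℤ)).map (c A B) := by
  intro A B
  have h := tricITS B A
  have h2 : c (B⟦(1:ℤ)⟧) A ≫ (s₂ A B).hom ≫ (shiftFunctor D (1:ℤ)).map (c A B) =
      (s₁ B A).hom := by
    rw [← Category.assoc, h, Category.assoc, ← Functor.map_comp, hcinv B A,
      CategoryTheory.Functor.map_id, Category.comp_id]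
  calc c A (B⟦(1:ℤ)⟧) ≫ (s₁ B A).hom
      = c A (B⟦(1:ℤ)⟧) ≫ c (B⟦(1:ℤ)⟧) A ≫ (s₂ A B).hom ≫
          (shiftFunctor D (1:ℤ)).map (c A B) := by rw [h2]
    _ = (s₂ A B).hom ≫ (shiftFunctor D (1:ℤ)).map (c A B) := by
        rw [← Category.assoc, hcinv, Category.id_comp]
end

section
/- Let H be a geometric S-fibered category (every smooth p : P → S has p_# ⊣ p^* and smooth base change holds). If an internal tensor structure (⊗, m) on H satisfies the projection formula (ITS-pf), i.e., the canonical map p_#(A ⊗ p^*B) → p_#A ⊗ B (defined as the composite of the unit η, m_p, and the counit ε) is invertible for all smooth p, then the external tensor structure (⊠, m^e) obtained via A₁ ⊠ A₂ = pr₁^*A₁ ⊗ pr₂^*A₂ satisfies the external projection formula (ETS-pf): the canonical map (p₁ × id)_#(A₁ ⊠ A₂) → (p₁,# A₁) ⊠ A₂ is invertible for all smooth p₁. -/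
/-!
The square `pr₁ ∘ (p₁ × id) = p₁ ∘ pr₁` is Cartesian, so by smooth base change the exchange map
`(p₁ × id)_# pr₁^* A₁ ⟶ pr₁^* p₁,# A₁` is invertible. Unwinding units, counits and monoidality
isomorphisms, the external projection map for `(A₁, A₂)` is the internal one for `p₁ × id` at
`(pr₁^* A₁, pr₂^* A₂)`, preceded by the comparison `pr₂^* A₂ ≅ (p₁ × id)^* pr₂^* A₂` and followed
by the exchange map tensored with `pr₂^* A₂`; all three factors are invertible.
-/

open CategoryTheory Limits

universe v u w z

variable {S : Type z} [Category.{w} S] [HasBinaryProducts S]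

/-- The external tensor product obtained from an internal tensor structure:
`A₁ ⊠ A₂ := pr₁^* A₁ ⊗ pr₂^* A₂`. -/
noncomputable def extT (F : SFib.{v, u} S) (T : ITS F) (s₁ s₂ : S) :
    F.H s₁ × F.H s₂ ⥤ F.H (s₁ ⨯ s₂) :=
  (F.pull (prod.fst : s₁ ⨯ s₂ ⟶ s₁)).prod (F.pull (prod.snd : s₁ ⨯ s₂ ⟶ s₂)) ⋙
    T.tensor (s₁ ⨯ s₂)

/-- The external monoidality isomorphism
`m^e_{f₁,f₂} : f₁^*A₁ ⊠ f₂^*A₂ ≅ (f₁ × f₂)^*(A₁ ⊠ A₂)` obtained from an internal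
tensor structure, built out of connection isomorphisms and `m_{f₁ × f₂}`. -/
noncomputable def mE (F : SFib.{v, u} S) (T : ITS F) {t₁ s₁ t₂ s₂ : S}
    (f₁ : t₁ ⟶ s₁) (f₂ : t₂ ⟶ s₂) :
    (F.pull f₁).prod (F.pull f₂) ⋙ extT F T t₁ t₂ ≅
      extT F T s₁ s₂ ⋙ F.pull (prod.map f₁ f₂) :=
  Functor.isoWhiskerRight
    (NatIso.prod
      ((F.conn (prod.fst : t₁ ⨯ t₂ ⟶ t₁) f₁).symm ≪≫
        eqToIso (show F.pull ((prod.fst : t₁ ⨯ t₂ ⟶ t₁) ≫ f₁) =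
            F.pull (prod.map f₁ f₂ ≫ (prod.fst : s₁ ⨯ s₂ ⟶ s₁)) by rw [prod.map_fst]) ≪≫
        F.conn (prod.map f₁ f₂) (prod.fst : s₁ ⨯ s₂ ⟶ s₁))
      ((F.conn (prod.snd : t₁ ⨯ t₂ ⟶ t₂) f₂).symm ≪≫
        eqToIso (show F.pull ((prod.snd : t₁ ⨯ t₂ ⟶ t₂) ≫ f₂) =
            F.pull (prod.map f₁ f₂ ≫ (prod.snd : s₁ ⨯ s₂ ⟶ s₂)) by rw [prod.map_snd]) ≪≫
        F.conn (prod.map f₁ f₂) (prod.snd : s₁ ⨯ s₂ ⟶ s₂)))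
    (T.tensor (t₁ ⨯ t₂)) ≪≫
  Functor.isoWhiskerLeft
    ((F.pull (prod.fst : s₁ ⨯ s₂ ⟶ s₁)).prod (F.pull (prod.snd : s₁ ⨯ s₂ ⟶ s₂)))
    (T.m (prod.map f₁ f₂))

section Geometric

variable (F : SFib.{v, u} S) (T : ITS F)
variable (Sm : ∀ {X Y : S}, (X ⟶ Y) → Prop)
variable (sh : ∀ {P X : S} (p : P ⟶ X), Sm p → (F.H P ⥤ F.H X))
variable (adj : ∀ {P X : S} (p : P ⟶ X) (hp : Sm p), sh p hp ⊣ F.pull p)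

/-- The base-change (exchange) morphism `p'_# g'^* A ⟶ g^* p_# A` associated to a
commutative square `g' ≫ p = p' ≫ g` with `p, p'` smooth, built from the unit and
counit of the adjunctions `p_# ⊣ p^*`, `p'_# ⊣ p'^*` and the connection
isomorphisms. -/
noncomputable def exch {P Sb S' P' : S} (p : P ⟶ Sb) (hp : Sm p) (g : S' ⟶ Sb)
    (p' : P' ⟶ S') (hp' : Sm p') (g' : P' ⟶ P) (hcomm : g' ≫ p = p' ≫ g)
    (A : F.H P) :
    (sh p' hp').obj ((F.pull g').obj A) ⟶ (F.pull g).obj ((sh p hp).obj A) :=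
  (sh p' hp').map
      ((F.pull g').map ((adj p hp).unit.app A) ≫
        (F.conn g' p).inv.app ((sh p hp).obj A) ≫
        eqToHom (show (F.pull (g' ≫ p)).obj ((sh p hp).obj A) =
            (F.pull (p' ≫ g)).obj ((sh p hp).obj A) by rw [hcomm]) ≫
        (F.conn p' g).hom.app ((sh p hp).obj A)) ≫
    (adj p' hp').counit.app ((F.pull g).obj ((sh p hp).obj A))

/-- The internal projection-formula morphism `p_#(A ⊗ p^*B) ⟶ p_#A ⊗ B`, defined as
the composite of the unit `η`, the monoidality isomorphism `m_p` and the counit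
`ε`. -/
noncomputable def projInt {P X : S} (p : P ⟶ X) (hp : Sm p) (A : F.H P)
    (B : F.H X) :
    (sh p hp).obj ((T.tensor P).obj (A, (F.pull p).obj B)) ⟶
      (T.tensor X).obj ((sh p hp).obj A, B) :=
  (sh p hp).map
      ((T.tensor P).map
          (((adj p hp).unit.app A, 𝟙 ((F.pull p).obj B)) :
            (A, (F.pull p).obj B) ⟶
              ((F.pull p).obj ((sh p hp).obj A), (F.pull p).obj B)) ≫
        (T.m p).hom.app ((sh p hp).obj A, B)) ≫
    (adj p hp).counit.app ((T.tensor X).obj ((sh p hp).obj A, B))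

/-- The external projection-formula morphism
`(p₁ × id)_#(A₁ ⊠ A₂) ⟶ (p₁,# A₁) ⊠ A₂`, defined via the unit, the external
monoidality isomorphism `m^e_{p₁, 𝟙}` and the counit. -/
noncomputable def projExt {P₁ S₁ : S} (p₁ : P₁ ⟶ S₁) (hp₁ : Sm p₁) (S₂ : S)
    (hq : Sm (prod.map p₁ (𝟙 S₂))) (A₁ : F.H P₁) (A₂ : F.H S₂) :
    (sh (prod.map p₁ (𝟙 S₂)) hq).obj ((extT F T P₁ S₂).obj (A₁, A₂)) ⟶
      (extT F T S₁ S₂).obj ((sh p₁ hp₁).obj A₁, A₂) :=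
  (sh (prod.map p₁ (𝟙 S₂)) hq).map
      ((extT F T P₁ S₂).map
          (((adj p₁ hp₁).unit.app A₁, 𝟙 A₂) :
            (A₁, A₂) ⟶ ((F.pull p₁).obj ((sh p₁ hp₁).obj A₁), A₂)) ≫
        eqToHom (show
            (extT F T P₁ S₂).obj ((F.pull p₁).obj ((sh p₁ hp₁).obj A₁), A₂) =
              ((F.pull p₁).prod (F.pull (𝟙 S₂)) ⋙ extT F T P₁ S₂).obj
                ((sh p₁ hp₁).obj A₁, A₂) by rw [F.pull_id]; rfl) ≫
        (mE F T p₁ (𝟙 S₂)).hom.app ((sh p₁ hp₁).obj A₁, A₂)) ≫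
    (adj (prod.map p₁ (𝟙 S₂)) hq).counit.app
      ((extT F T S₁ S₂).obj ((sh p₁ hp₁).obj A₁, A₂))

section

open CategoryTheory.Prod

variable {C : Type*} [Category C] (F : SFib.{v, u} C) (T : ITS F)
variable (Sm : ∀ {X Y : C}, (X ⟶ Y) → Prop)
variable (sh : ∀ {P X : C} (p : P ⟶ X), Sm p → (F.H P ⥤ F.H X))
variable (adj : ∀ {P X : C} (p : P ⟶ X) (hp : Sm p), sh p hp ⊣ F.pull p)

instance isIso_prod_mkHom {X Y X' Y' : C} (f : X ⟶ Y) (g : X' ⟶ Y') [IsIso f] [IsIso g] :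
    IsIso (f ×ₘ g) :=
  (isIso_prod_iff (f := f ×ₘ g)).mpr ⟨‹_›, ‹_›⟩

lemma eqToHom_eq_map_id_prod_eqToHom {D E : Type*} [Category D] [Category E]
    (t : C × D ⥤ E) (x : C) {y y' : D} (h : y = y') (h' : t.obj (x, y) = t.obj (x, y')) :
    eqToHom h' = t.map (𝟙 x ×ₘ eqToHom h) := by
  subst h
  rw [eqToHom_refl, eqToHom_refl, ← prod_id, CategoryTheory.Functor.map_id]

noncomputable def SFib.pullSquareIso {a b b' c : C} {f : a ⟶ b} {g : b ⟶ c} {f' : a ⟶ b'}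
    {g' : b' ⟶ c} (h : f ≫ g = f' ≫ g') : F.pull g ⋙ F.pull f ≅ F.pull g' ⋙ F.pull f' :=
  (F.conn f g).symm ≪≫ eqToIso (by rw [h]) ≪≫ F.conn f' g'

lemma homEquiv_exch {P Sb S' P' : C} (p : P ⟶ Sb) (hp : Sm p) (g : S' ⟶ Sb)
    (p' : P' ⟶ S') (hp' : Sm p') (g' : P' ⟶ P) (hcomm : g' ≫ p = p' ≫ g) (A : F.H P) :
    (adj p' hp').homEquiv _ _ (exch F Sm sh adj p hp g p' hp' g' hcomm A) =
      (F.pull g').map ((adj p hp).unit.app A) ≫ (F.pullSquareIso hcomm).hom.app _ := by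
  rw [← Equiv.eq_symm_apply]
  simp [exch, SFib.pullSquareIso, Adjunction.homEquiv_counit, eqToHom_app]

lemma projInt_comp_tensor_map {P X : C} (p : P ⟶ X) (hp : Sm p) (A : F.H P) (B : F.H X)
    {Y : F.H X} (f : (sh p hp).obj A ⟶ Y) :
    projInt F T Sm sh adj p hp A B ≫ (T.tensor X).map (f ×ₘ 𝟙 B) =
      ((adj p hp).homEquiv _ _).symm
        ((T.tensor P).map ((adj p hp).homEquiv _ _ f ×ₘ 𝟙 _) ≫ (T.m p).hom.app (Y, B)) := by
  have hm := (T.m p).hom.naturality (f ×ₘ 𝟙 B)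
  simp only [Functor.comp_map, Functor.prod_map, CategoryTheory.Functor.map_id] at hm
  rw [projInt, Category.assoc, ← Adjunction.counit_naturality, Adjunction.homEquiv_counit,
    Adjunction.homEquiv_unit, ← Functor.map_comp_assoc, Category.assoc, ← hm,
    ← Functor.map_comp_assoc]
  simp

variable [HasBinaryProducts C]

lemma mE_hom_app {t₁ s₁ t₂ s₂ : C} (f₁ : t₁ ⟶ s₁) (f₂ : t₂ ⟶ s₂) (X₁ : F.H s₁) (X₂ : F.H s₂) :
    (mE F T f₁ f₂).hom.app (X₁, X₂) =
      (T.tensor (t₁ ⨯ t₂)).map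
          ((F.pullSquareIso (prod.map_fst f₁ f₂).symm).hom.app X₁ ×ₘ
            (F.pullSquareIso (prod.map_snd f₁ f₂).symm).hom.app X₂) ≫
        (T.m (prod.map f₁ f₂)).hom.app ((F.pull prod.fst).obj X₁, (F.pull prod.snd).obj X₂) :=
  rfl

noncomputable def SFib.sndPullProdMapIdIso {P₁ S₁ : C} (p₁ : P₁ ⟶ S₁) (S₂ : C) (A₂ : F.H S₂) :
    (F.pull (prod.snd : P₁ ⨯ S₂ ⟶ S₂)).obj A₂ ≅
      (F.pull (prod.map p₁ (𝟙 S₂))).obj ((F.pull prod.snd).obj A₂) :=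
  eqToIso (by rw [F.pull_id]; rfl) ≪≫
    (F.pullSquareIso (prod.map_snd p₁ (𝟙 S₂)).symm).app A₂

lemma projExt_eq_map_comp_projInt_comp_map {P₁ S₁ : C} (p₁ : P₁ ⟶ S₁) (hp₁ : Sm p₁) (S₂ : C)
    (hq : Sm (prod.map p₁ (𝟙 S₂))) (A₁ : F.H P₁) (A₂ : F.H S₂) :
    projExt F T Sm sh adj p₁ hp₁ S₂ hq A₁ A₂ =
      (sh _ hq).map ((T.tensor (P₁ ⨯ S₂)).map (𝟙 _ ×ₘ (F.sndPullProdMapIdIso p₁ S₂ A₂).hom)) ≫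
        projInt F T Sm sh adj _ hq ((F.pull prod.fst).obj A₁) ((F.pull prod.snd).obj A₂) ≫
        (T.tensor (S₁ ⨯ S₂)).map
          (exch F Sm sh adj p₁ hp₁ prod.fst _ hq prod.fst (prod.map_fst p₁ (𝟙 S₂)).symm A₁ ×ₘ
            𝟙 _) := by
  rw [projInt_comp_tensor_map, homEquiv_exch, Adjunction.homEquiv_counit,
    ← Functor.map_comp_assoc, projExt]
  congr 2
  rw [mE_hom_app]
  erw [eqToHom_eq_map_id_prod_eqToHom (T.tensor _) _
    (congrArg (F.pull prod.snd).obj (Functor.congr_obj (F.pull_id S₂) A₂).symm)]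
  simp only [SFib.sndPullProdMapIdIso, extT, Functor.comp_map, Functor.prod_map, Iso.trans_hom,
    eqToIso.hom, Iso.app_hom, ← Functor.map_comp_assoc, prod_comp, Category.id_comp,
    Category.comp_id, CategoryTheory.Functor.map_id]

end

theorem stmt18
    (bc : ∀ {P Sb S' P' : S} (p : P ⟶ Sb) (hp : Sm p) (g : S' ⟶ Sb) (p' : P' ⟶ S')
      (hp' : Sm p') (g' : P' ⟶ P) (hpb : IsPullback g' p' p g) (A : F.H P),
      IsIso (exch F Sm sh adj p hp g p' hp' g' hpb.w A))
    (hproj : ∀ {P X : S} (p : P ⟶ X) (hp : Sm p) (A : F.H P) (B : F.H X),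
      IsIso (projInt F T Sm sh adj p hp A B)) :
    ∀ {P₁ S₁ : S} (p₁ : P₁ ⟶ S₁) (hp₁ : Sm p₁) (S₂ : S)
      (hq : Sm (prod.map p₁ (𝟙 S₂))) (A₁ : F.H P₁) (A₂ : F.H S₂),
      IsIso (projExt F T Sm sh adj p₁ hp₁ S₂ hq A₁ A₂) := by
  intro P₁ S₁ p₁ hp₁ S₂ hq A₁ A₂
  have hprojInt := hproj _ hq ((F.pull prod.fst).obj A₁) ((F.pull prod.snd).obj A₂)
  have hexch := bc p₁ hp₁ prod.fst _ hq prod.fst (IsPullback.of_prod_fst_with_id p₁ S₂) A₁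
  rw [projExt_eq_map_comp_projInt_comp_map]
  -- the endpoints of `projExt` are stated through `extT`, those of the factors are not
  dsimp only [extT, Functor.comp_obj, Functor.prod_obj]
  infer_instance
end Geometric
end
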